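/- Let ρ > 1 and let {a_j}_{j∈ℤ} be a ρ-lacunary sequence of positive numbers, i.e. a_{j+1}/a_j ≥ ρ for all j. Then there exists a sequence {η_k}_{k∈ℤ} of positive numbers satisfying ρ ≤ η_{k+1}/η_k ≤ ρ² for all k, such that {a_j : j ∈ ℤ} ⊆ {η_k : k ∈ ℤ}. -/

import Mathlib

/-!
Pass to base-`ρ` logarithms: the gaps `d` of the sequence become `≥ 1`. Cut each gap into
`⌊d⌋₊` equal steps; each step `d / ⌊d⌋₊` lies in `[1, 2]`, because `⌊d⌋₊ ≤ d < ⌊d⌋₊ + 1 ≤ 2 ⌊d⌋₊`.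
Concatenating the blocks of steps, indexed by partial sums of the `⌊d⌋₊` over `ℤ`, and
exponentiating gives `η`.
-/

open Set

theorem Int.exists_add_one_eq_add {G : Type*} [AddGroup G] (f : ℤ → G) :
    ∃ F : ℤ → G, ∀ j, F (j + 1) = F j + f j := by
  refine ⟨fun j => j.inductionOn' 0 (motive := fun _ => G) 0 (fun k _ x => x + f k)
    (fun k _ x => x - f (k - 1)), fun j => ?_⟩
  rcases le_or_gt 0 j with hj | hj
  · exact Int.inductionOn'_add_one hj
  · have h := Int.inductionOn'_sub_one (motive := fun _ => G) (zero := 0)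
      (succ := fun k _ x => x + f k) (pred := fun k _ x => x - f (k - 1))
      (show j + 1 ≤ 0 by omega)
    simp only [add_sub_cancel_right] at h
    beta_reduce
    rw [h, sub_add_cancel]

theorem StrictMono.exists_mem_Ico {N : ℤ → ℤ} (hN : StrictMono N) (k : ℤ) :
    ∃ j, k ∈ Ico (N j) (N (j + 1)) := by
  have hshift : Monotone fun j => N j - j :=
    monotone_int_of_le_succ fun j => by have := hN (lt_add_one j); omega
  obtain ⟨j, hj, hmax⟩ := Int.exists_greatest_of_bdd (P := fun j => N j ≤ k)
    ⟨max (k - N 0) 0, fun j hj => by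
      rcases le_or_gt 0 j with h | h
      · have := hshift h; simp only at this; omega
      · omega⟩
    ⟨min (k - N 0) 0, by have := hshift (min_le_right (k - N 0) 0); simp only at this; omega⟩
  exact ⟨j, hj, lt_of_not_ge fun h => by have := hmax _ h; omega⟩

theorem StrictMono.eq_of_mem_Ico {N : ℤ → ℤ} (hN : StrictMono N) {i j k : ℤ}
    (hi : k ∈ Ico (N i) (N (i + 1))) (hj : k ∈ Ico (N j) (N (j + 1))) : i = j := by
  have h₁ := hN.lt_iff_lt.1 (hi.1.trans_lt hj.2)
  have h₂ := hN.lt_iff_lt.1 (hj.1.trans_lt hi.2)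
  omega

theorem exists_equal_subdivision {K : Type*} [Field K] [CharZero K] (b : ℤ → K) (n : ℤ → ℕ)
    (hn : ∀ j, n j ≠ 0) :
    ∃ c : ℤ → K, (∀ k, ∃ j, c (k + 1) - c k = (b (j + 1) - b j) / n j) ∧ ∀ j, ∃ k, c k = b j := by
  obtain ⟨N, hN⟩ := Int.exists_add_one_eq_add fun j => (n j : ℤ)
  have hNmono : StrictMono N := strictMono_int_of_lt_succ fun j => by
    have := hn j; rw [hN]; omega
  choose J hJ using hNmono.exists_mem_Ico
  have hJ_eq {j k : ℤ} (h : k ∈ Ico (N j) (N (j + 1))) : J k = j := hNmono.eq_of_mem_Ico (hJ k) h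
  have hJN (j : ℤ) : J (N j) = j := hJ_eq ⟨le_rfl, hNmono (lt_add_one j)⟩
  refine ⟨fun k => b (J k) + (k - N (J k)) * ((b (J k + 1) - b (J k)) / n (J k)),
    fun k => ⟨J k, ?_⟩, fun j => ⟨N j, by simp [hJN]⟩⟩
  obtain ⟨hk₁, hk₂⟩ := hJ k
  beta_reduce
  rcases (Int.add_one_le_of_lt hk₂).lt_or_eq with hlt | heq
  · rw [hJ_eq ⟨by omega, hlt⟩]
    push_cast
    ring
  · have hn' : (n (J k) : K) = k + 1 - N (J k) := by exact_mod_cast (by rw [heq, hN]; ring)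
    have hn0 : (n (J k) : K) ≠ 0 := Nat.cast_ne_zero.2 (hn _)
    rw [heq, hJN, sub_self, zero_mul, add_zero]
    field_simp
    rw [hn']
    ring

theorem div_natFloor_mem_Icc {K : Type*} [Field K] [LinearOrder K] [IsStrictOrderedRing K]
    [FloorSemiring K] {d : K} (hd : 1 ≤ d) : d / ⌊d⌋₊ ∈ Icc 1 2 := by
  have hn : (1 : K) ≤ ⌊d⌋₊ := by exact_mod_cast (Nat.one_le_floor_iff d).2 hd
  have hpos : (0 : K) < ⌊d⌋₊ := by linarith
  refine ⟨(one_le_div hpos).2 (Nat.floor_le (by linarith)), (div_le_iff₀ hpos).2 ?_⟩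
  linarith [Nat.lt_floor_add_one d]

theorem exists_refinement_sub_mem_Icc {K : Type*} [Field K] [LinearOrder K]
    [IsStrictOrderedRing K] [FloorSemiring K] (b : ℤ → K) (hb : ∀ j, 1 ≤ b (j + 1) - b j) :
    ∃ c : ℤ → K, (∀ k, c (k + 1) - c k ∈ Icc 1 2) ∧ ∀ j, ∃ k, c k = b j := by
  obtain ⟨c, hstep, hbc⟩ := exists_equal_subdivision b (fun j => ⌊b (j + 1) - b j⌋₊)
    fun j => (Nat.floor_pos.2 (hb j)).ne'
  refine ⟨c, fun k => ?_, hbc⟩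
  obtain ⟨j, hj⟩ := hstep k
  exact hj ▸ div_natFloor_mem_Icc (hb j)

theorem stmt_9 (ρ : ℝ) (hρ : 1 < ρ) (a : ℤ → ℝ) (ha : ∀ j, 0 < a j)
    (hlac : ∀ j, ρ ≤ a (j + 1) / a j) :
    ∃ η : ℤ → ℝ, (∀ k, 0 < η k) ∧
      (∀ k, ρ ≤ η (k + 1) / η k ∧ η (k + 1) / η k ≤ ρ ^ 2) ∧
      ∀ j, ∃ k, η k = a j := by
  have hρ₀ : 0 < ρ := one_pos.trans hρ
  have hgap (j : ℤ) : 1 ≤ Real.logb ρ (a (j + 1)) - Real.logb ρ (a j) := by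
    rw [← Real.logb_div (ha _).ne' (ha _).ne',
      Real.le_logb_iff_rpow_le hρ (div_pos (ha _) (ha _)), Real.rpow_one]
    exact hlac j
  obtain ⟨c, hc, hca⟩ := exists_refinement_sub_mem_Icc (fun j => Real.logb ρ (a j)) hgap
  refine ⟨fun k => ρ ^ c k, fun k => Real.rpow_pos_of_pos hρ₀ _, fun k => ?_, fun j => ?_⟩
  · obtain ⟨hlo, hhi⟩ := hc k
    rw [← Real.rpow_sub hρ₀]
    exact ⟨by simpa using Real.rpow_le_rpow_of_exponent_le hρ.le hlo,
      by simpa using Real.rpow_le_rpow_of_exponent_le hρ.le hhi⟩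
  · obtain ⟨k, hk⟩ := hca j
    exact ⟨k, by simp only [hk, Real.rpow_logb hρ₀ hρ.ne' (ha j)]⟩
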